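/- Let ι be a finite type and d : ι → ℕ with 2 ≤ d i for all i. Let λ, μ be real numbers with λ > 0 and μ > 0, and let D, D' be sets of functions ι → Bool each of whose elements takes the value false at some index (neither set contains the constantly-true function). Then M(λ, D) ⊆ M(μ, D') if and only if λ = μ and D ⊆ D'. -/
import Mathlib


open scoped ComplexOrder

/-- For a bit assignment `b : ι → Bool`, `Lspan d b` is the ℝ-linear span of all matrices of
the form `M g h = ∏ i, (f i) (g i) (h i)` where each `f i` is Hermitian, `f i = 1` whenever
`b i = true`, and `trace (f i) = 0` whenever `b i = false`. -/
noncomputable def Lspan {ι : Type} [Fintype ι] [DecidableEq ι] (d : ι → ℕ) (b : ι → Bool) :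
    Submodule ℝ (Matrix ((i : ι) → Fin (d i)) ((i : ι) → Fin (d i)) ℂ) :=
  Submodule.span ℝ {M | ∃ f : (i : ι) → Matrix (Fin (d i)) (Fin (d i)) ℂ,
    (∀ i, (f i).IsHermitian) ∧ (∀ i, b i = true → f i = 1) ∧
    (∀ i, b i = false → (f i).trace = 0) ∧
    M = Matrix.of fun g h => ∏ i, f i (g i) (h i)}

/-- `L(D)`: the ℝ-span of the union of the spaces `L(b)` for `b ∈ D`. -/
noncomputable def LspanSet {ι : Type} [Fintype ι] [DecidableEq ι] (d : ι → ℕ)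
    (D : Set (ι → Bool)) :
    Submodule ℝ (Matrix ((i : ι) → Fin (d i)) ((i : ι) → Fin (d i)) ℂ) :=
  ⨆ b ∈ D, Lspan d b

set_option linter.unusedSectionVars false
set_option linter.unusedVariables false

section Aux
variable {ι : Type} [Fintype ι] [DecidableEq ι] {d : ι → ℕ}

/-- Fubini for generators: double sum of products of entrywise products. -/
lemma aux_double_sum (A B : ∀ i, Matrix (Fin (d i)) (Fin (d i)) ℂ) :
    ∑ g : (i : ι) → Fin (d i), ∑ h : (i : ι) → Fin (d i),
      (∏ i, A i (g i) (h i)) * (∏ i, B i (g i) (h i))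
      = ∏ i, ∑ k, ∑ l, A i k l * B i k l := by
  rw [Fintype.prod_sum (fun i k => ∑ l, A i k l * B i k l)]
  refine Finset.sum_congr rfl fun g _ => ?_
  rw [Fintype.prod_sum (fun i l => A i (g i) l * B i (g i) l)]
  refine Finset.sum_congr rfl fun h _ => ?_
  rw [← Finset.prod_mul_distrib]

lemma aux_trace_gen (f : ∀ i, Matrix (Fin (d i)) (Fin (d i)) ℂ) :
    (Matrix.of fun g h : (i : ι) → Fin (d i) => ∏ i, f i (g i) (h i)).trace
      = ∏ i, (f i).trace := by
  simp only [Matrix.trace, Matrix.diag, Matrix.of_apply]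
  rw [Fintype.prod_sum (fun i k => f i k k)]

/-- The Hilbert–Schmidt-type ℝ-linear functional against a fixed coefficient matrix `C`. -/
noncomputable def auxPhi (C : Matrix ((i : ι) → Fin (d i)) ((i : ι) → Fin (d i)) ℂ) :
    Matrix ((i : ι) → Fin (d i)) ((i : ι) → Fin (d i)) ℂ →ₗ[ℝ] ℂ where
  toFun M := ∑ g, ∑ h, C g h * M g h
  map_add' M N := by simp [Matrix.add_apply, mul_add, Finset.sum_add_distrib]
  map_smul' r M := by
    simp only [Matrix.smul_apply, RingHom.id_apply, Finset.smul_sum, smul_eq_mul]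
    refine Finset.sum_congr rfl fun g _ => ?_
    exact Finset.sum_congr rfl fun h _ => mul_smul_comm r (C g h) (M g h)

lemma aux_factor {n : ℕ} (v : Fin n → ℂ) (A : Matrix (Fin n) (Fin n) ℂ) :
    ∑ k, ∑ l, Matrix.diagonal v k l * A k l = ∑ k, v k * A k k := by
  refine Finset.sum_congr rfl fun k _ => ?_
  simp [Matrix.diagonal_apply, ite_mul]

/-- Kernel lemma: if a functional kills all generators of `Lspan d b` for every `b ∈ D₀`,
then `LspanSet d D₀ ≤ ker ψ`. -/
lemma aux_lspanSet_le_ker (ψ : Matrix ((i : ι) → Fin (d i)) ((i : ι) → Fin (d i)) ℂ →ₗ[ℝ] ℂ)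
    (D₀ : Set (ι → Bool))
    (h : ∀ b ∈ D₀, ∀ f : (i : ι) → Matrix (Fin (d i)) (Fin (d i)) ℂ,
      (∀ i, (f i).IsHermitian) → (∀ i, b i = true → f i = 1) →
      (∀ i, b i = false → (f i).trace = 0) →
      ψ (Matrix.of fun g h => ∏ i, f i (g i) (h i)) = 0) :
    LspanSet d D₀ ≤ LinearMap.ker ψ := by
  rw [LspanSet]
  refine iSup₂_le fun b hb => Submodule.span_le.2 ?_
  rintro M ⟨f, hf1, hf2, hf3, rfl⟩
  exact h b hb f hf1 hf2 hf3

section Construction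
variable (d) (hd : ∀ i, 2 ≤ d i) (b : ι → Bool)

noncomputable def zidx (i : ι) : Fin (d i) := ⟨0, by have := hd i; omega⟩
noncomputable def oidx (i : ι) : Fin (d i) := ⟨1, by have := hd i; omega⟩

lemma zidx_ne_oidx (i : ι) : zidx d hd i ≠ oidx d hd i := by
  simp [zidx, oidx, Fin.ext_iff]

noncomputable def svR (i : ι) (k : Fin (d i)) : ℝ :=
  if b i then 1 else ((if k = zidx d hd i then 1 else 0) - (if k = oidx d hd i then 1 else 0))

lemma svR_abs_le (i : ι) (k : Fin (d i)) : |svR d hd b i k| ≤ 1 := by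
  unfold svR
  split
  · simp
  · split <;> split <;> simp_all [zidx_ne_oidx]

lemma svR_zidx (i : ι) : svR d hd b i (zidx d hd i) = 1 := by
  simp [svR, (zidx_ne_oidx d hd i)]

lemma svR_sum_zero (i : ι) (hb : b i = false) : ∑ k, svR d hd b i k = 0 := by
  simp only [svR, hb, Bool.false_eq_true, if_false, Finset.sum_sub_distrib]
  rw [Finset.sum_ite_eq' Finset.univ (zidx d hd i) (fun _ => (1:ℝ)),
    Finset.sum_ite_eq' Finset.univ (oidx d hd i) (fun _ => (1:ℝ))]
  simp

noncomputable def fmat (i : ι) : Matrix (Fin (d i)) (Fin (d i)) ℂ :=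
  Matrix.diagonal fun k => (svR d hd b i k : ℂ)

lemma fmat_herm (i : ι) : (fmat d hd b i).IsHermitian :=
  Matrix.isHermitian_diagonal_iff.2 fun k => Complex.conj_ofReal _

lemma fmat_one (i : ι) (hb : b i = true) : fmat d hd b i = 1 := by
  have : (fun k => ((svR d hd b i k : ℂ))) = fun _ => 1 := by
    funext k; simp [svR, hb]
  rw [fmat, this, Matrix.diagonal_one]

lemma fmat_trace (i : ι) (hb : b i = false) : (fmat d hd b i).trace = 0 := by
  simp only [fmat, Matrix.trace_diagonal]
  rw [← Complex.ofReal_sum]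
  rw [svR_sum_zero d hd b i hb]
  simp

noncomputable def Tmat : Matrix ((i : ι) → Fin (d i)) ((i : ι) → Fin (d i)) ℂ :=
  Matrix.of fun g h => ∏ i, fmat d hd b i (g i) (h i)

lemma Tmat_mem : Tmat d hd b ∈ Lspan d b :=
  Submodule.subset_span (R := ℝ) ⟨fmat d hd b, fmat_herm d hd b, fmat_one d hd b, fmat_trace d hd b, rfl⟩

lemma Tmat_diag : Tmat d hd b
    = Matrix.diagonal fun g => ((∏ i, svR d hd b i (g i) : ℝ) : ℂ) := by
  ext g h
  by_cases hgh : g = h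
  · subst hgh
    simp [Tmat, fmat, Matrix.diagonal_apply_eq]
  · obtain ⟨i0, hi0⟩ := Function.ne_iff.1 hgh
    rw [Matrix.diagonal_apply_ne _ hgh]
    simp only [Tmat, Matrix.of_apply]
    exact Finset.prod_eq_zero (Finset.mem_univ i0) (Matrix.diagonal_apply_ne _ hi0)

lemma aux_psd {lam : ℝ} (hlam : 0 ≤ lam) :
    (lam • (1 : Matrix ((i : ι) → Fin (d i)) ((i : ι) → Fin (d i)) ℂ)
      + lam • Tmat d hd b).PosSemidef := by
  have hdiag : lam • (1 : Matrix ((i : ι) → Fin (d i)) ((i : ι) → Fin (d i)) ℂ)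
      + lam • Tmat d hd b
      = Matrix.diagonal fun g => ((lam * (1 + ∏ i, svR d hd b i (g i)) : ℝ) : ℂ) := by
    rw [Tmat_diag]
    ext g h
    by_cases hgh : g = h
    · subst hgh
      simp only [Matrix.add_apply, Matrix.smul_apply, Matrix.one_apply_eq,
        Matrix.diagonal_apply_eq]
      push_cast
      rw [Complex.real_smul, Complex.real_smul]
      ring
    · simp [Matrix.diagonal_apply_ne _ hgh, Matrix.one_apply_ne hgh]
  rw [hdiag]
  refine Matrix.posSemidef_diagonal_iff.2 fun g => ?_
  rw [Complex.zero_le_real]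
  have habs : |∏ i, svR d hd b i (g i)| ≤ 1 := by
    rw [Finset.abs_prod]
    exact Finset.prod_le_one (fun i _ => abs_nonneg _) (fun i _ => svR_abs_le d hd b i (g i))
  have : (0:ℝ) ≤ 1 + ∏ i, svR d hd b i (g i) := by
    have := neg_abs_le (∏ i, svR d hd b i (g i))
    linarith
  positivity

lemma aux_phi_gen (f : ∀ i, Matrix (Fin (d i)) (Fin (d i)) ℂ) :
    auxPhi (Tmat d hd b) (Matrix.of fun g h => ∏ i, f i (g i) (h i))
      = ∏ i, ∑ k, ∑ l, fmat d hd b i k l * f i k l := by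
  simp only [auxPhi, LinearMap.coe_mk, AddHom.coe_mk, Tmat, Matrix.of_apply]
  exact aux_double_sum (fmat d hd b) f

lemma aux_phi_vanish {b' : ι → Bool} (hne : b ≠ b')
    (f : ∀ i, Matrix (Fin (d i)) (Fin (d i)) ℂ)
    (hf2 : ∀ i, b' i = true → f i = 1) (hf3 : ∀ i, b' i = false → (f i).trace = 0) :
    auxPhi (Tmat d hd b) (Matrix.of fun g h => ∏ i, f i (g i) (h i)) = 0 := by
  rw [aux_phi_gen]
  obtain ⟨i0, hi0⟩ := Function.ne_iff.1 hne
  refine Finset.prod_eq_zero (Finset.mem_univ i0) ?_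
  rw [fmat, aux_factor]
  rcases hb : b i0 with _ | _
  · -- b i0 = false, so b' i0 = true, f i0 = 1
    have hb' : b' i0 = true := by
      cases hb' : b' i0
      · exact absurd (hb.trans hb'.symm) hi0
      · rfl
    rw [hf2 i0 hb']
    have : ∀ k : Fin (d i0), ((svR d hd b i0 k : ℂ)) * (1 : Matrix (Fin (d i0)) (Fin (d i0)) ℂ) k k
        = (svR d hd b i0 k : ℂ) := by
      intro k; rw [Matrix.one_apply_eq, mul_one]
    rw [Finset.sum_congr rfl fun k _ => this k, ← Complex.ofReal_sum,
      svR_sum_zero d hd b i0 hb]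
    simp
  · -- b i0 = true, so b' i0 = false, trace f i0 = 0
    have hb' : b' i0 = false := by
      cases hb'' : b' i0
      · rfl
      · exact absurd (hb.trans hb''.symm) hi0
    have hone : ∀ k : Fin (d i0), ((svR d hd b i0 k : ℂ)) = 1 := by
      intro k; simp [svR, hb]
    calc ∑ k, (svR d hd b i0 k : ℂ) * f i0 k k = ∑ k, f i0 k k := by
          refine Finset.sum_congr rfl fun k _ => ?_
          rw [hone k, one_mul]
      _ = (f i0).trace := rfl
      _ = 0 := hf3 i0 hb'

lemma aux_phi_self_ne : auxPhi (Tmat d hd b) (Tmat d hd b) ≠ 0 := by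
  have := aux_phi_gen d hd b (fmat d hd b)
  rw [Tmat] at this ⊢
  rw [this]
  refine Finset.prod_ne_zero_iff.2 fun i _ => ?_
  rw [show (fmat d hd b i) = Matrix.diagonal fun k => (svR d hd b i k : ℂ) from rfl, aux_factor]
  have : ∀ k : Fin (d i), ((svR d hd b i k : ℂ))
      * Matrix.diagonal (fun k => (svR d hd b i k : ℂ)) k k
      = ((svR d hd b i k ^ 2 : ℝ) : ℂ) := by
    intro k; rw [Matrix.diagonal_apply_eq]; push_cast; ring
  rw [Finset.sum_congr rfl fun k _ => this k, ← Complex.ofReal_sum]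
  rw [Complex.ofReal_ne_zero]
  have hpos : (0:ℝ) < ∑ k, svR d hd b i k ^ 2 := by
    have h1 : svR d hd b i (zidx d hd i) ^ 2 = 1 := by rw [svR_zidx]; norm_num
    have h2 : (1:ℝ) ≤ ∑ k, svR d hd b i k ^ 2 := by
      have := Finset.single_le_sum (f := fun k => svR d hd b i k ^ 2)
        (fun k _ => sq_nonneg _) (Finset.mem_univ (zidx d hd i))
      simpa [h1] using this
    linarith
  exact ne_of_gt hpos

end Construction
end Aux

/-- `M(λ, D)`: positive semidefinite matrices of the form `λ • 1 + T` with `T ∈ L(D)`. -/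
noncomputable def Mset {ι : Type} [Fintype ι] [DecidableEq ι] (d : ι → ℕ)
    (lam : ℝ) (D : Set (ι → Bool)) :
    Set (Matrix ((i : ι) → Fin (d i)) ((i : ι) → Fin (d i)) ℂ) :=
  {R | R.PosSemidef ∧ ∃ T ∈ LspanSet d D,
    R = lam • (1 : Matrix ((i : ι) → Fin (d i)) ((i : ι) → Fin (d i)) ℂ) + T}

/-- with all local dimensions at least 2, `λ, μ > 0`, and `D, D'` sets of bit
assignments none of which is constantly true, `M(λ,D) ⊆ M(μ,D')` iff `λ = μ` and `D ⊆ D'`. -/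
theorem stmt19 {ι : Type} [Fintype ι] [DecidableEq ι] (d : ι → ℕ) (hd : ∀ i, 2 ≤ d i)
    (lam mu : ℝ) (hlam : 0 < lam) (hmu : 0 < mu)
    (D D' : Set (ι → Bool))
    (hD : ∀ b ∈ D, ∃ i, b i = false) (hD' : ∀ b ∈ D', ∃ i, b i = false) :
    Mset d lam D ⊆ Mset d mu D' ↔ (lam = mu ∧ D ⊆ D') := by
  constructor
  · intro hsub
    set trR : Matrix ((i : ι) → Fin (d i)) ((i : ι) → Fin (d i)) ℂ →ₗ[ℝ] ℂ :=
      (Matrix.traceLinearMap ((i : ι) → Fin (d i)) ℂ ℂ).restrictScalars ℝ with htrR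
    have htr : LspanSet d D' ≤ LinearMap.ker trR := by
      refine aux_lspanSet_le_ker trR D' fun b hb f hf1 hf2 hf3 => ?_
      show ((Matrix.of fun g h => ∏ i, f i (g i) (h i)) :
        Matrix ((i : ι) → Fin (d i)) ((i : ι) → Fin (d i)) ℂ).trace = 0
      rw [aux_trace_gen]
      obtain ⟨i0, hi0⟩ := hD' b hb
      exact Finset.prod_eq_zero (Finset.mem_univ i0) (hf3 i0 hi0)
    have h1psd : (lam • (1 : Matrix ((i : ι) → Fin (d i)) ((i : ι) → Fin (d i)) ℂ)).PosSemidef := by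
      have : lam • (1 : Matrix ((i : ι) → Fin (d i)) ((i : ι) → Fin (d i)) ℂ)
          = Matrix.diagonal fun _ => ((lam : ℝ) : ℂ) := by
        ext g h
        by_cases hgh : g = h
        · subst hgh
          simp [Matrix.smul_apply, Matrix.one_apply_eq, Complex.real_smul]
        · simp [Matrix.smul_apply, Matrix.one_apply_ne hgh, Matrix.diagonal_apply_ne _ hgh]
      rw [this]
      exact Matrix.posSemidef_diagonal_iff.2 fun _ => Complex.zero_le_real.2 hlam.le
    obtain ⟨-, T', hT', hEq⟩ := hsub ⟨h1psd, 0, Submodule.zero_mem _, (add_zero _).symm⟩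
    have hT'tr : T'.trace = 0 := htr hT'
    have hlm : lam = mu := by
      have hN : ((Fintype.card ((i : ι) → Fin (d i)) : ℕ) : ℂ) ≠ 0 := by
        haveI : Nonempty ((i : ι) → Fin (d i)) := ⟨fun i => zidx d hd i⟩
        exact_mod_cast Fintype.card_pos.ne'
      have := congrArg Matrix.trace hEq
      rw [Matrix.trace_add, Matrix.trace_smul, Matrix.trace_smul, Matrix.trace_one,
        hT'tr, add_zero] at this
      have h2 : (lam : ℂ) * (Fintype.card ((i : ι) → Fin (d i)) : ℂ)
          = (mu : ℂ) * (Fintype.card ((i : ι) → Fin (d i)) : ℂ) := by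
        simpa [Complex.real_smul] using this
      exact_mod_cast mul_right_cancel₀ hN h2
    refine ⟨hlm, fun b hb => ?_⟩
    by_contra hbD'
    have hTmem : lam • Tmat d hd b ∈ LspanSet d D := by
      refine Submodule.smul_mem _ lam ?_
      have hle : Lspan d b ≤ LspanSet d D := by
        rw [LspanSet]; exact le_iSup₂ (f := fun b' _ => Lspan d b') b hb
      exact hle (Tmat_mem d hd b)
    obtain ⟨-, T', hT'2, hEq2⟩ := hsub ⟨aux_psd d hd b hlam.le, lam • Tmat d hd b, hTmem, rfl⟩
    have hTT' : lam • Tmat d hd b = T' := by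
      rw [← hlm] at hEq2
      exact add_left_cancel hEq2
    have hker : LspanSet d D' ≤ LinearMap.ker (auxPhi (Tmat d hd b)) := by
      refine aux_lspanSet_le_ker _ D' fun b' hb' f hf1 hf2 hf3 => ?_
      exact aux_phi_vanish d hd b (fun h => hbD' (h ▸ hb')) f hf2 hf3
    have h0 : auxPhi (Tmat d hd b) T' = 0 := hker hT'2
    rw [← hTT', map_smul] at h0
    rcases smul_eq_zero.1 h0 with h | h
    · exact hlam.ne' h
    · exact aux_phi_self_ne d hd b h
  · rintro ⟨rfl, hDD'⟩ R ⟨hpsd, T, hT, hEq⟩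
    refine ⟨hpsd, T, ?_, hEq⟩
    have hle : LspanSet d D ≤ LspanSet d D' := by
      rw [LspanSet, LspanSet]
      exact iSup₂_le fun b hb => le_iSup₂ (f := fun b' _ => Lspan d b') b (hDD' hb)
    exact hle hT
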